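/- Let L be a third-order operator of the normalized form L = D_xx ∘ D_y + Σ_{i+j≤2} a_{ij}·D_x^i ∘ D_y^j with smooth coefficients a_{ij} : ℝ² → ℝ (principal symbol X²Y). Suppose L has a first-order left factor of symbol X and a first-order right factor of symbol Y, i.e., there are smooth functions p, q and smooth second-order coefficient functions such that L = (D_x + p) ∘ H with H = D_xy + h₁·D_x + h₂·D_y + h₀, and L = G ∘ (D_y + q) with G = D_xx + g₁·D_x + g₂·D_y + g₀. Then there exists a smooth function b : ℝ² → ℝ such that L = (D_x + p) ∘ (D_x + b) ∘ (D_y + q); that is, L factors into three first-order factors whose left factor is exactly D_x + p and whose right factor is exactly D_y + q. -/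

import Mathlib

/-- Operators act on functions `ℝ × ℝ → ℝ`. -/
abbrev Fn := ℝ × ℝ → ℝ

/-- Partial derivative in the first coordinate direction. -/
noncomputable def Dx (u : Fn) : Fn := fun p => fderiv ℝ u p (1, 0)

/-- Partial derivative in the second coordinate direction. -/
noncomputable def Dy (u : Fn) : Fn := fun p => fderiv ℝ u p (0, 1)

/-- The first coordinate function `x`. -/
def xf : Fn := fun p => p.1

/-- The second coordinate function `y`. -/
def yf : Fn := fun p => p.2

/-- Smoothness of a function `ℝ × ℝ → ℝ`. -/
def IsSmooth (u : Fn) : Prop := ContDiff ℝ (⊤ : ℕ∞) u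

/-- The normalized third-order operator `L = D_xx∘D_y + Σ_{i+j≤2} a_ij·D_x^i∘D_y^j`
with principal symbol `X²Y`. -/
noncomputable def L3 (a20 a11 a02 a10 a01 a00 : Fn) (u : Fn) : Fn :=
  Dx (Dx (Dy u)) + a20 * Dx (Dx u) + a11 * Dx (Dy u) + a02 * Dy (Dy u) +
    a10 * Dx u + a01 * Dy u + a00 * u

/-! ### Auxiliary lemmas -/

lemma smooth_diff {u : Fn} (h : IsSmooth u) : Differentiable ℝ u := h.differentiable (by simp)

lemma smooth_dx {u : Fn} (h : IsSmooth u) : IsSmooth (Dx u) := by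
  have h1 : ContDiff ℝ (⊤ : ℕ∞) (fderiv ℝ u) := h.fderiv_right (by simp)
  exact h1.clm_apply contDiff_const

lemma smooth_dy {u : Fn} (h : IsSmooth u) : IsSmooth (Dy u) := by
  have h1 : ContDiff ℝ (⊤ : ℕ∞) (fderiv ℝ u) := h.fderiv_right (by simp)
  exact h1.clm_apply contDiff_const

lemma sm_one : IsSmooth (1 : Fn) := contDiff_const

lemma sm_mul {u v : Fn} (hu : IsSmooth u) (hv : IsSmooth v) : IsSmooth (u * v) :=
  hu.mul hv

lemma diff_mul {u v : Fn} (hu : Differentiable ℝ u) (hv : Differentiable ℝ v) :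
    Differentiable ℝ (u * v) := hu.mul hv

lemma diff_add {u v : Fn} (hu : Differentiable ℝ u) (hv : Differentiable ℝ v) :
    Differentiable ℝ (u + v) := hu.add hv

lemma diff_one : Differentiable ℝ (1 : Fn) := differentiable_const 1

lemma diff_zero : Differentiable ℝ (0 : Fn) := differentiable_const 0

lemma Dx_add {u v : Fn} (hu : Differentiable ℝ u) (hv : Differentiable ℝ v) :
    Dx (u + v) = Dx u + Dx v := by
  funext z
  have : fderiv ℝ (fun y => u y + v y) z = fderiv ℝ u z + fderiv ℝ v z :=
    fderiv_add (hu z) (hv z)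
  simp only [Dx, Pi.add_def, this, ContinuousLinearMap.add_apply]

lemma Dy_add {u v : Fn} (hu : Differentiable ℝ u) (hv : Differentiable ℝ v) :
    Dy (u + v) = Dy u + Dy v := by
  funext z
  have : fderiv ℝ (fun y => u y + v y) z = fderiv ℝ u z + fderiv ℝ v z :=
    fderiv_add (hu z) (hv z)
  simp only [Dy, Pi.add_def, this, ContinuousLinearMap.add_apply]

lemma Dx_mul {f u : Fn} (hf : Differentiable ℝ f) (hu : Differentiable ℝ u) :
    Dx (f * u) = f * Dx u + u * Dx f := by
  funext z
  have : fderiv ℝ (fun y => f y * u y) z = f z • fderiv ℝ u z + u z • fderiv ℝ f z :=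
    fderiv_mul (hf z) (hu z)
  simp only [Dx, Pi.mul_def, Pi.add_def, this, ContinuousLinearMap.add_apply,
    ContinuousLinearMap.smul_apply, smul_eq_mul]

lemma Dy_mul {f u : Fn} (hf : Differentiable ℝ f) (hu : Differentiable ℝ u) :
    Dy (f * u) = f * Dy u + u * Dy f := by
  funext z
  have : fderiv ℝ (fun y => f y * u y) z = f z • fderiv ℝ u z + u z • fderiv ℝ f z :=
    fderiv_mul (hf z) (hu z)
  simp only [Dy, Pi.mul_def, Pi.add_def, this, ContinuousLinearMap.add_apply,
    ContinuousLinearMap.smul_apply, smul_eq_mul]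

lemma Dx_one : Dx (1 : Fn) = 0 := by
  funext z
  show fderiv ℝ (fun _ : ℝ × ℝ => (1 : ℝ)) z (1, 0) = 0
  rw [fderiv_fun_const]
  rfl

lemma Dx_zero : Dx (0 : Fn) = 0 := by
  funext z
  show fderiv ℝ (fun _ : ℝ × ℝ => (0 : ℝ)) z (1, 0) = 0
  rw [fderiv_fun_const]
  rfl

lemma Dy_zero : Dy (0 : Fn) = 0 := by
  funext z
  show fderiv ℝ (fun _ : ℝ × ℝ => (0 : ℝ)) z (0, 1) = 0
  rw [fderiv_fun_const]
  rfl

/-- Shifted first-coordinate polynomial. -/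
def Pone (z₀ : ℝ × ℝ) : Fn := fun z => z.1 - z₀.1

/-- Shifted second-coordinate polynomial. -/
def Ptwo (z₀ : ℝ × ℝ) : Fn := fun z => z.2 - z₀.2

lemma smooth_Pone (z₀ : ℝ × ℝ) : IsSmooth (Pone z₀) := contDiff_fst.sub contDiff_const

lemma smooth_Ptwo (z₀ : ℝ × ℝ) : IsSmooth (Ptwo z₀) := contDiff_snd.sub contDiff_const

lemma Pone_self (z₀ : ℝ × ℝ) : Pone z₀ z₀ = 0 := sub_self _

lemma Ptwo_self (z₀ : ℝ × ℝ) : Ptwo z₀ z₀ = 0 := sub_self _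

lemma hasFDerivAt_Pone (z₀ z : ℝ × ℝ) :
    HasFDerivAt (Pone z₀) (ContinuousLinearMap.fst ℝ ℝ ℝ) z :=
  hasFDerivAt_fst.sub_const z₀.1

lemma hasFDerivAt_Ptwo (z₀ z : ℝ × ℝ) :
    HasFDerivAt (Ptwo z₀) (ContinuousLinearMap.snd ℝ ℝ ℝ) z :=
  hasFDerivAt_snd.sub_const z₀.2

lemma Dx_Pone (z₀ : ℝ × ℝ) : Dx (Pone z₀) = 1 := by
  funext z
  simp [Dx, (hasFDerivAt_Pone z₀ z).fderiv]

lemma Dy_Pone (z₀ : ℝ × ℝ) : Dy (Pone z₀) = 0 := by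
  funext z
  simp [Dy, (hasFDerivAt_Pone z₀ z).fderiv]

lemma Dx_Ptwo (z₀ : ℝ × ℝ) : Dx (Ptwo z₀) = 0 := by
  funext z
  simp [Dx, (hasFDerivAt_Ptwo z₀ z).fderiv]

lemma Dy_Ptwo (z₀ : ℝ × ℝ) : Dy (Ptwo z₀) = 1 := by
  funext z
  simp [Dy, (hasFDerivAt_Ptwo z₀ z).fderiv]

/-- The second-order mixed operator `H`. -/
noncomputable def Hop (h1 h2 h0 u : Fn) : Fn := Dx (Dy u) + h1 * Dx u + h2 * Dy u + h0 * u

/-- The second-order operator `G`. -/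
noncomputable def Gop (g1 g2 g0 v : Fn) : Fn := Dx (Dx v) + g1 * Dx v + g2 * Dy v + g0 * v

/-- The paper's main theorem for normalized form `X²Y`, left symbol `X`, right symbol
`Y`: if `L` has a first-order left factor `D_x + p` and a first-order right factor
`D_y + q`, then `L` factors into three first-order factors with left factor exactly
`D_x + p` and right factor exactly `D_y + q`. -/
theorem third_order_XXY_left_right_factor
    (a20 a11 a02 a10 a01 a00 p q h1 h2 h0 g1 g2 g0 : Fn)
    (ha20 : IsSmooth a20) (ha11 : IsSmooth a11) (ha02 : IsSmooth a02)
    (ha10 : IsSmooth a10) (ha01 : IsSmooth a01) (ha00 : IsSmooth a00)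
    (hp : IsSmooth p) (hq : IsSmooth q)
    (hh1 : IsSmooth h1) (hh2 : IsSmooth h2) (hh0 : IsSmooth h0)
    (hg1 : IsSmooth g1) (hg2 : IsSmooth g2) (hg0 : IsSmooth g0)
    (hleft : ∀ u : Fn, IsSmooth u →
      L3 a20 a11 a02 a10 a01 a00 u =
        (fun v => Dx v + p * v)
          (Dx (Dy u) + h1 * Dx u + h2 * Dy u + h0 * u))
    (hright : ∀ u : Fn, IsSmooth u →
      L3 a20 a11 a02 a10 a01 a00 u =
        (fun v => Dx (Dx v) + g1 * Dx v + g2 * Dy v + g0 * v)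
          (Dy u + q * u)) :
    ∃ b : Fn, IsSmooth b ∧
      ∀ u : Fn, IsSmooth u →
        L3 a20 a11 a02 a10 a01 a00 u =
          (fun v => Dx v + p * v)
            ((fun v => Dx v + b * v)
              ((fun v => Dy v + q * v) u)) := by
  -- differentiability shorthands
  have dp := smooth_diff hp
  have dq := smooth_diff hq
  have dh1 := smooth_diff hh1
  have dh2 := smooth_diff hh2
  have dh0 := smooth_diff hh0
  have dg1 := smooth_diff hg1
  have dqx := smooth_diff (smooth_dx hq)
  -- Key identity 1 : h1 = q  (from the test function (x-x₀)²)
  have key1 : h1 = q := by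
    funext z₀
    have sP1 := smooth_Pone z₀
    have dP1 := smooth_diff sP1
    have su : IsSmooth (Pone z₀ * Pone z₀) := sm_mul sP1 sP1
    have du := smooth_diff su
    have dPP : Differentiable ℝ (Pone z₀ + Pone z₀) := diff_add dP1 dP1
    have E : (Dx (Hop h1 h2 h0 (Pone z₀ * Pone z₀)) + p * Hop h1 h2 h0 (Pone z₀ * Pone z₀)) z₀
        = Gop g1 g2 g0 (Dy (Pone z₀ * Pone z₀) + q * (Pone z₀ * Pone z₀)) z₀ :=
      congrFun ((hleft _ su).symm.trans (hright _ su)) z₀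
    have eDxu : Dx (Pone z₀ * Pone z₀) = Pone z₀ + Pone z₀ := by
      rw [Dx_mul dP1 dP1, Dx_Pone]; funext z; simp
    have eDyu : Dy (Pone z₀ * Pone z₀) = 0 := by
      rw [Dy_mul dP1 dP1, Dy_Pone]; funext z; simp
    have eH : Hop h1 h2 h0 (Pone z₀ * Pone z₀)
        = h1 * (Pone z₀ + Pone z₀) + h0 * (Pone z₀ * Pone z₀) := by
      unfold Hop
      rw [eDxu, eDyu, Dx_zero]
      funext z; simp
    rw [eH] at E
    rw [Dx_add (diff_mul dh1 dPP) (diff_mul dh0 du), Dx_mul dh1 dPP, Dx_mul dh0 du,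
      Dx_add dP1 dP1, Dx_Pone, eDxu] at E
    -- right side
    rw [eDyu] at E
    unfold Gop at E
    have dqu : Differentiable ℝ (q * (Pone z₀ * Pone z₀)) := diff_mul dq du
    rw [Dx_add diff_zero dqu, Dx_zero, Dx_mul dq du, eDxu] at E
    have dQR : Differentiable ℝ (q * (Pone z₀ + Pone z₀) + Pone z₀ * Pone z₀ * Dx q) :=
      diff_add (diff_mul dq dPP) (diff_mul du dqx)
    rw [Dx_add diff_zero dQR, Dx_zero,
      Dx_add (diff_mul dq dPP) (diff_mul du dqx), Dx_mul dq dPP, Dx_mul du dqx,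
      Dx_add dP1 dP1, Dx_Pone, eDxu] at E
    rw [Dy_add diff_zero dqu, Dy_zero, Dy_mul dq du, eDyu] at E
    simp [Pone_self] at E
    linarith [E]
  -- Key identity 2 : h2 + p = g1  (from the test function (x-x₀)(y-y₀))
  have key3 : ∀ z₀ : ℝ × ℝ, h2 z₀ + p z₀ = g1 z₀ := by
    intro z₀
    have sP1 := smooth_Pone z₀
    have sP2 := smooth_Ptwo z₀
    have dP1 := smooth_diff sP1
    have dP2 := smooth_diff sP2
    have su : IsSmooth (Pone z₀ * Ptwo z₀) := sm_mul sP1 sP2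
    have du := smooth_diff su
    have E : (Dx (Hop h1 h2 h0 (Pone z₀ * Ptwo z₀)) + p * Hop h1 h2 h0 (Pone z₀ * Ptwo z₀)) z₀
        = Gop g1 g2 g0 (Dy (Pone z₀ * Ptwo z₀) + q * (Pone z₀ * Ptwo z₀)) z₀ :=
      congrFun ((hleft _ su).symm.trans (hright _ su)) z₀
    have eDxu : Dx (Pone z₀ * Ptwo z₀) = Ptwo z₀ := by
      rw [Dx_mul dP1 dP2, Dx_Ptwo, Dx_Pone]; funext z; simp
    have eDyu : Dy (Pone z₀ * Ptwo z₀) = Pone z₀ := by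
      rw [Dy_mul dP1 dP2, Dy_Ptwo, Dy_Pone]; funext z; simp
    have eH : Hop h1 h2 h0 (Pone z₀ * Ptwo z₀)
        = 1 + h1 * Ptwo z₀ + h2 * Pone z₀ + h0 * (Pone z₀ * Ptwo z₀) := by
      unfold Hop
      rw [eDxu, eDyu, Dx_Pone]
    rw [eH] at E
    have dB : Differentiable ℝ (h1 * Ptwo z₀) := diff_mul dh1 dP2
    have dC : Differentiable ℝ (h2 * Pone z₀) := diff_mul dh2 dP1
    have dD : Differentiable ℝ (h0 * (Pone z₀ * Ptwo z₀)) := diff_mul dh0 du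
    rw [Dx_add (diff_add (diff_add diff_one dB) dC) dD,
      Dx_add (diff_add diff_one dB) dC,
      Dx_add diff_one dB, Dx_one,
      Dx_mul dh1 dP2, Dx_mul dh2 dP1, Dx_mul dh0 du,
      Dx_Pone, Dx_Ptwo, eDxu] at E
    -- right side
    unfold Gop at E
    have dqu : Differentiable ℝ (q * (Pone z₀ * Ptwo z₀)) := diff_mul dq du
    rw [eDyu] at E
    rw [Dx_add dP1 dqu, Dx_Pone, Dx_mul dq du, eDxu] at E
    have dQR : Differentiable ℝ (q * Ptwo z₀ + Pone z₀ * Ptwo z₀ * Dx q) :=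
      diff_add (diff_mul dq dP2) (diff_mul du dqx)
    rw [Dx_add diff_one dQR, Dx_one,
      Dx_add (diff_mul dq dP2) (diff_mul du dqx),
      Dx_mul dq dP2, Dx_mul du dqx, Dx_Ptwo, eDxu] at E
    rw [Dy_add dP1 dqu, Dy_Pone, Dy_mul dq du, eDyu] at E
    simp [Pone_self, Ptwo_self] at E
    linarith [E]
  -- Key identity 3 (from the test function (x-x₀))
  have key2 : ∀ z₀ : ℝ × ℝ, Dx h1 z₀ + h0 z₀ + p z₀ * h1 z₀ = 2 * Dx q z₀ + g1 z₀ * q z₀ := by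
    intro z₀
    have sP1 := smooth_Pone z₀
    have dP1 := smooth_diff sP1
    have E : (Dx (Hop h1 h2 h0 (Pone z₀)) + p * Hop h1 h2 h0 (Pone z₀)) z₀
        = Gop g1 g2 g0 (Dy (Pone z₀) + q * Pone z₀) z₀ :=
      congrFun ((hleft _ sP1).symm.trans (hright _ sP1)) z₀
    have eH : Hop h1 h2 h0 (Pone z₀) = h1 * 1 + h0 * Pone z₀ := by
      unfold Hop
      rw [Dx_Pone, Dy_Pone, Dx_zero]
      funext z; simp
    rw [eH] at E
    rw [Dx_add (diff_mul dh1 diff_one) (diff_mul dh0 dP1), Dx_mul dh1 diff_one,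
      Dx_mul dh0 dP1, Dx_one, Dx_Pone] at E
    -- right side
    unfold Gop at E
    have dqu : Differentiable ℝ (q * Pone z₀) := diff_mul dq dP1
    rw [Dy_Pone] at E
    rw [Dx_add diff_zero dqu, Dx_zero, Dx_mul dq dP1, Dx_Pone] at E
    have dQR : Differentiable ℝ (q * 1 + Pone z₀ * Dx q) :=
      diff_add (diff_mul dq diff_one) (diff_mul dP1 dqx)
    rw [Dx_add diff_zero dQR, Dx_zero,
      Dx_add (diff_mul dq diff_one) (diff_mul dP1 dqx),
      Dx_mul dq diff_one, Dx_mul dP1 dqx, Dx_one, Dx_Pone] at E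
    rw [Dy_add diff_zero dqu, Dy_zero, Dy_mul dq dP1, Dy_Pone] at E
    simp [Pone_self] at E
    linarith [E]
  -- conclude h0 = Dx q + h2 * q
  have hh0eq : h0 = Dx q + h2 * q := by
    funext z
    have e2 := key2 z
    have e3 := key3 z
    rw [key1] at e2
    simp only [Pi.add_apply, Pi.mul_apply]
    linear_combination e2 - q z * e3
  -- main conclusion with b = h2
  refine ⟨h2, hh2, fun u hu => ?_⟩
  have du := smooth_diff hu
  have dDyu := smooth_diff (smooth_dy hu)
  have dqu : Differentiable ℝ (q * u) := diff_mul dq du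
  have inner : Dx (Dy u + q * u) + h2 * (Dy u + q * u)
      = Dx (Dy u) + h1 * Dx u + h2 * Dy u + h0 * u := by
    rw [Dx_add dDyu dqu, Dx_mul dq du, key1, hh0eq]
    funext z
    simp only [Pi.add_apply, Pi.mul_apply]
    ring
  simp only []
  rw [inner]
  exact hleft u hu
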